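/- Let P be an irreducible nonnegative n×n matrix (n≥2) with exactly d positive main diagonal entries, 1≤d≤n. Then P^{2n-d-1} is entrywise strictly positive; in particular P is primitive with index of primitivity at most 2n−d−1. -/
import Mathlib


/-- `P` is reducible: some simultaneous permutation of rows and columns brings it
to block lower-triangular form with an `r × (n - r)` zero block in the upper right. -/
def IsReducible {n : ℕ} (P : Matrix (Fin n) (Fin n) ℝ) : Prop :=
  ∃ σ : Equiv.Perm (Fin n), ∃ r : ℕ, 1 ≤ r ∧ r ≤ n - 1 ∧
    ∀ i j : Fin n, (i : ℕ) < r → r ≤ (j : ℕ) → P (σ i) (σ j) = 0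


lemma pow_entry_nonneg {n : ℕ} (P : Matrix (Fin n) (Fin n) ℝ)
    (hP : ∀ i j, 0 ≤ P i j) : ∀ k i j, 0 ≤ (P ^ k) i j := by
  intro k
  induction k with
  | zero => intro i j; simp [Matrix.one_apply]; positivity
  | succ k ih =>
      intro i j
      rw [pow_succ, Matrix.mul_apply]
      exact Finset.sum_nonneg fun m _ => mul_nonneg (ih i m) (hP m j)

lemma pow_entry_pos_mul {n : ℕ} (P : Matrix (Fin n) (Fin n) ℝ)
    (hP : ∀ i j, 0 ≤ P i j) {a b : ℕ} {i j k : Fin n}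
    (ha : 0 < (P ^ a) i j) (hb : 0 < (P ^ b) j k) : 0 < (P ^ (a + b)) i k := by
  rw [pow_add, Matrix.mul_apply]
  refine Finset.sum_pos' (fun m _ => mul_nonneg (pow_entry_nonneg P hP a i m)
    (pow_entry_nonneg P hP b m k)) ⟨j, Finset.mem_univ j, mul_pos ha hb⟩

lemma reducible_aux {n : ℕ} (P : Matrix (Fin n) (Fin n) ℝ)
    (S : Finset (Fin n)) (hne : S.Nonempty) (hproper : S ≠ Finset.univ)
    (hclosed : ∀ a ∈ S, ∀ b ∉ S, P a b = 0) : IsReducible P := by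
  set r := S.card with hrdef
  have hrn : r ≤ n := by simpa using S.card_le_univ
  have hrlt : r < n := by
    rcases lt_or_eq_of_le hrn with h | h
    · exact h
    · exact absurd (Finset.eq_univ_of_card S (by simp only [Fintype.card_fin]; omega)) hproper
  have hr1 : 1 ≤ r := Finset.card_pos.mpr hne
  have hcompl : Sᶜ.card = n - r := by simp [Finset.card_compl, hrdef]
  have hadd : n = r + (n - r) := by omega
  let e1 := S.orderIsoOfFin (rfl : S.card = r)
  let e2 := Sᶜ.orderIsoOfFin hcompl
  let e3 : {x // x ∈ Sᶜ} ≃ {x : Fin n // x ∉ S} :=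
    Equiv.subtypeEquivRight (fun x => Finset.mem_compl)
  let σ : Equiv.Perm (Fin n) :=
    (finCongr hadd).trans
      ((finSumFinEquiv (m := r) (n := n - r)).symm.trans
        ((Equiv.sumCongr e1.toEquiv (e2.toEquiv.trans e3)).trans
          (Equiv.sumCompl (fun x : Fin n => x ∈ S))))
  have hmem : ∀ i : Fin n, (i : ℕ) < r → σ i ∈ S := by
    intro i hi
    have h1 : (finCongr hadd) i = Fin.castAdd (n - r) ⟨(i : ℕ), hi⟩ := by
      ext; simp
    simp only [σ, Equiv.trans_apply, h1, finSumFinEquiv_symm_apply_castAdd,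
      Equiv.sumCongr_apply, Sum.map_inl, Equiv.sumCompl_apply_inl]
    exact (e1 ⟨(i : ℕ), hi⟩).2
  have hnmem : ∀ j : Fin n, r ≤ (j : ℕ) → σ j ∉ S := by
    intro j hj
    have hlt : (j : ℕ) - r < n - r := by omega
    have h1 : (finCongr hadd) j = Fin.natAdd r ⟨(j : ℕ) - r, hlt⟩ := by
      ext; simp; omega
    simp only [σ, Equiv.trans_apply, h1, finSumFinEquiv_symm_apply_natAdd,
      Equiv.sumCongr_apply, Sum.map_inr, Equiv.sumCompl_apply_inr]
    exact (e3 (e2 ⟨(j : ℕ) - r, hlt⟩)).2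
  exact ⟨σ, r, hr1, by omega, fun i j hi hj => hclosed _ (hmem i hi) _ (hnmem j hj)⟩

lemma reach_forward {n : ℕ} (P : Matrix (Fin n) (Fin n) ℝ)
    (hP : ∀ i j, 0 ≤ P i j) (hirr : ¬ IsReducible P) (i : Fin n) :
    ∀ j, ∃ k ≤ n - 1, 0 < (P ^ k) i j := by
  classical
  set S : ℕ → Finset (Fin n) :=
    fun k => Finset.univ.filter (fun j => ∃ m ≤ k, 0 < (P ^ m) i j) with hS
  have hmemS : ∀ k j, j ∈ S k ↔ ∃ m ≤ k, 0 < (P ^ m) i j := by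
    intro k j; simp [hS]
  have hmono : ∀ k, S k ⊆ S (k + 1) := by
    intro k j hj
    rw [hmemS] at *
    obtain ⟨m, hm, h⟩ := hj
    exact ⟨m, by omega, h⟩
  have hik : ∀ k, i ∈ S k := fun k =>
    (hmemS k i).mpr ⟨0, Nat.zero_le k, by simp [Matrix.one_apply]⟩
  have hcard : ∀ k, min n (k + 1) ≤ (S k).card := by
    intro k
    induction k with
    | zero =>
        have := Finset.card_pos.mpr ⟨i, hik 0⟩
        omega
    | succ k ih =>
        by_cases hu : S k = Finset.univ
        · have huniv : S (k + 1) = Finset.univ :=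
            Finset.univ_subset_iff.mp (hu ▸ hmono k)
          rw [huniv, Finset.card_univ, Fintype.card_fin]
          omega
        · have hedge : ∃ a ∈ S k, ∃ b, b ∉ S k ∧ P a b ≠ 0 := by
            by_contra h
            push_neg at h
            exact hirr (reducible_aux P (S k) ⟨i, hik k⟩ hu
              (fun a ha b hb => h a ha b hb))
          obtain ⟨a, ha, b, hb, hab⟩ := hedge
          have hbpos : 0 < P a b := lt_of_le_of_ne (hP a b) (Ne.symm hab)
          obtain ⟨m, hm, hma⟩ := (hmemS k a).mp ha
          have hb1 : b ∈ S (k + 1) := (hmemS _ _).mpr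
            ⟨m + 1, by omega, pow_entry_pos_mul P hP hma (by simpa [pow_one] using hbpos)⟩
          have hss : S k ⊂ S (k + 1) :=
            (Finset.ssubset_iff_of_subset (hmono k)).mpr ⟨b, hb1, hb⟩
          have h1 := Finset.card_lt_card hss
          have h2 : (S (k + 1)).card ≤ n := by
            simpa using (S (k + 1)).card_le_univ
          omega
  intro j
  have h1 : (S (n - 1)).card ≤ n := by simpa using (S (n - 1)).card_le_univ
  have h2 := hcard (n - 1)
  by_cases hn0 : n = 0
  · exact absurd (Fin.pos i) (by omega)
  have hcardeq : (S (n - 1)).card = n := by omega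
  have huniv : S (n - 1) = Finset.univ :=
    Finset.eq_univ_of_card _ (by simp [hcardeq])
  exact (hmemS _ j).mp (huniv ▸ Finset.mem_univ j)

lemma reach_backward {n : ℕ} (P : Matrix (Fin n) (Fin n) ℝ)
    (hP : ∀ i j, 0 ≤ P i j) (hirr : ¬ IsReducible P)
    (W : Finset (Fin n)) (hW : W.Nonempty) (i : Fin n) :
    ∃ w ∈ W, ∃ k ≤ n - W.card, 0 < (P ^ k) i w := by
  classical
  set T : ℕ → Finset (Fin n) :=
    fun k => Finset.univ.filter (fun a => ∃ w ∈ W, ∃ m ≤ k, 0 < (P ^ m) a w) with hT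
  have hmemT : ∀ k a, a ∈ T k ↔ ∃ w ∈ W, ∃ m ≤ k, 0 < (P ^ m) a w := by
    intro k a; simp [hT]
  have hmono : ∀ k, T k ⊆ T (k + 1) := by
    intro k a ha
    rw [hmemT] at *
    obtain ⟨w, hw, m, hm, h⟩ := ha
    exact ⟨w, hw, m, by omega, h⟩
  have hWT : ∀ k, W ⊆ T k := by
    intro k w hw
    exact (hmemT k w).mpr ⟨w, hw, 0, Nat.zero_le k, by simp [Matrix.one_apply]⟩
  have hd : W.card ≤ n := by simpa using W.card_le_univ
  have hcard : ∀ k, min n (k + W.card) ≤ (T k).card := by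
    intro k
    induction k with
    | zero =>
        have := Finset.card_le_card (hWT 0)
        omega
    | succ k ih =>
        by_cases hu : T k = Finset.univ
        · have huniv : T (k + 1) = Finset.univ :=
            Finset.univ_subset_iff.mp (hu ▸ hmono k)
          rw [huniv, Finset.card_univ, Fintype.card_fin]
          omega
        · have hedge : ∃ a, a ∉ T k ∧ ∃ b ∈ T k, P a b ≠ 0 := by
            by_contra h
            push_neg at h
            refine hirr (reducible_aux P (T k)ᶜ ?_ ?_ ?_)
            · rw [← Finset.card_pos, Finset.card_compl]
              have h1 : (T k).card ≤ n := by simpa using (T k).card_le_univ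
              have h2 : (T k).card ≠ n := fun hc =>
                hu (Finset.eq_univ_of_card _ (by simp [hc]))
              simp only [Fintype.card_fin]
              omega
            · intro hc
              obtain ⟨w, hw⟩ := hW
              have : w ∈ (T k)ᶜ := hc ▸ Finset.mem_univ w
              exact (Finset.mem_compl.mp this) (hWT k hw)
            · intro a ha b hb
              rw [Finset.mem_compl] at ha hb
              push_neg at hb
              exact h a ha b hb
          obtain ⟨a, ha, b, hb, hab⟩ := hedge
          have habpos : 0 < P a b := lt_of_le_of_ne (hP a b) (Ne.symm hab)
          obtain ⟨w, hw, m, hm, hmb⟩ := (hmemT k b).mp hb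
          have ha1 : a ∈ T (k + 1) := (hmemT _ _).mpr
            ⟨w, hw, 1 + m, by omega,
              pow_entry_pos_mul P hP (by simpa [pow_one] using habpos) hmb⟩
          have hss : T k ⊂ T (k + 1) :=
            (Finset.ssubset_iff_of_subset (hmono k)).mpr ⟨a, ha1, ha⟩
          have h1 := Finset.card_lt_card hss
          have h2 : (T (k + 1)).card ≤ n := by
            simpa using (T (k + 1)).card_le_univ
          omega
  have h1 : (T (n - W.card)).card ≤ n := by simpa using (T (n - W.card)).card_le_univ
  have h2 := hcard (n - W.card)
  have hd1 : 1 ≤ W.card := Finset.card_pos.mpr hW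
  have hcardeq : (T (n - W.card)).card = n := by omega
  have huniv : T (n - W.card) = Finset.univ :=
    Finset.eq_univ_of_card _ (by simp [hcardeq])
  obtain ⟨w, hw, m, hm, h⟩ := (hmemT _ i).mp (huniv ▸ Finset.mem_univ i)
  exact ⟨w, hw, m, hm, h⟩

/-- if `P` is irreducible with exactly `d = |W| ≥ 1` positive main
diagonal entries (at the positions in `W`), then `P^(2n-d-1) > 0`; in particular
`P` is primitive with index of primitivity at most `2n - d - 1`. -/
theorem irreducible_partial_diag_primitive {n : ℕ} (hn : 2 ≤ n)
    (P : Matrix (Fin n) (Fin n) ℝ) (hP : ∀ i j, 0 ≤ P i j)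
    (hirr : ¬ IsReducible P)
    (W : Finset (Fin n)) (hW : W.Nonempty)
    (hdiag : ∀ i, 0 < P i i ↔ i ∈ W) :
    (∀ i j, 0 < (P ^ (2 * n - W.card - 1)) i j) ∧
    sInf {t : ℕ | 1 ≤ t ∧ ∀ i j, 0 < (P ^ t) i j} ≤ 2 * n - W.card - 1 := by
  have hd : W.card ≤ n := by simpa using W.card_le_univ
  have hd1 : 1 ≤ W.card := Finset.card_pos.mpr hW
  have hmain : ∀ i j, 0 < (P ^ (2 * n - W.card - 1)) i j := by
    intro i j
    obtain ⟨w, hw, k1, hk1, h1⟩ := reach_backward P hP hirr W hW i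
    obtain ⟨k2, hk2, h2⟩ := reach_forward P hP hirr w j
    have hloop : ∀ t, 0 < (P ^ t) w w := by
      intro t
      induction t with
      | zero => simp [Matrix.one_apply]
      | succ t ih =>
          exact pow_entry_pos_mul P hP ih (by simpa [pow_one] using (hdiag w).mpr hw)
    have hsum : k1 + ((2 * n - W.card - 1 - k1 - k2) + k2) = 2 * n - W.card - 1 := by
      omega
    have := pow_entry_pos_mul P hP h1
      (pow_entry_pos_mul P hP (hloop (2 * n - W.card - 1 - k1 - k2)) h2)
    rwa [hsum] at this
  refine ⟨hmain, Nat.sInf_le ⟨by omega, hmain⟩⟩
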